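/- arXiv:1201.1834 — 10 statements merged into one kernel-verified Lean document; each statement's English description precedes it below -/
import Mathlib

section
/- Every perfect lattice is similar to an integral lattice. -/
/-!
Let `M` be the matrix whose rows are a basis of the lattice and `G = M Mᵀ` its Gram matrix, so
the lattice vectors are the `z M` with `z ∈ ℤⁿ`, and the minimal ones are those with `zᵀ G z = m`.
Perfection says that these equations determine a symmetric matrix: the only symmetric `H` with
`zᵀ H z = 0` for all of them is `0`. Applying entrywise to `G` any `ℚ`-linear map `φ : ℝ → ℝ` with
`φ m = 0` produces such an `H`, so every entry of `G` lies in `ℚ m`. If `d` is a common denominator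
of the rationals `G i j / m`, scaling by `√(d / m)` makes the lattice integral.
-/

open Matrix Finset

/-- `L` is a lattice in ℝⁿ: the ℤ-span of an ℝ-basis of ℝⁿ. -/
def IsLat {n : ℕ} (L : Submodule ℤ (Fin n → ℝ)) : Prop :=
  ∃ b : Module.Basis (Fin n) ℝ (Fin n → ℝ), L = Submodule.span ℤ (Set.range ⇑b)

/-- For `X = Min L` this is the perfection of `L`. -/
def SpansSymm {ι R : Type*} [CommSemiring R] (X : Set (ι → R)) : Prop :=
  ∀ A : Matrix ι ι R, A.IsSymm → A ∈ Submodule.span R ((fun x => vecMulVec x x) '' X)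

theorem SpansSymm.mono {ι R : Type*} [CommSemiring R] {X Y : Set (ι → R)} (hX : SpansSymm X)
    (hXY : X ⊆ Y) : SpansSymm Y :=
  fun A hA => Submodule.span_mono (Set.image_mono hXY) (hX A hA)

theorem AddMonoidHom.intCast_dotProduct_map_mulVec {ι R S : Type*} [Fintype ι] [Ring R] [Ring S]
    (f : R →+ S) (G : Matrix ι ι R) (z w : ι → ℤ) :
    (Int.cast ∘ z) ⬝ᵥ (G.map f *ᵥ (Int.cast ∘ w)) =
      f ((Int.cast ∘ z) ⬝ᵥ (G *ᵥ (Int.cast ∘ w))) := by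
  have hf : ∀ (k : ℤ) (a : R), f (k * a) = k * f a := fun k a => by
    rw [← zsmul_eq_mul, map_zsmul, zsmul_eq_mul]
  simp only [dotProduct, mulVec, map_sum, Function.comp_apply, mul_sum, Matrix.map_apply]
  refine Finset.sum_congr rfl fun i _ => Finset.sum_congr rfl fun j _ => ?_
  rw [← Int.cast_comm (w j) (G i j), hf, hf, Int.cast_comm (w j) (f (G i j))]

section Finite

variable {ι : Type*} [Fintype ι] [DecidableEq ι]

theorem SpansSymm.of_image_vecMul {R : Type*} [CommRing R] {Y : Set (ι → R)} {M : Matrix ι ι R}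
    (hY : SpansSymm ((· ᵥ* M) '' Y)) (hM : IsUnit M.det) : SpansSymm Y := by
  intro A hA
  let Φ : Matrix ι ι R →ₗ[R] Matrix ι ι R :=
    LinearMap.mulRight R M⁻¹ ∘ₗ LinearMap.mulLeft R M⁻¹ᵀ
  have hΦ : ∀ Z, Φ (Mᵀ * Z * M) = Z := by
    intro Z
    have hinv : M⁻¹ᵀ * Mᵀ = 1 := by rw [← transpose_mul, mul_nonsing_inv _ hM, transpose_one]
    simp only [Φ, LinearMap.comp_apply, LinearMap.mulLeft_apply, LinearMap.mulRight_apply]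
    rw [← mul_assoc, ← mul_assoc, hinv, one_mul, mul_assoc, mul_nonsing_inv _ hM, mul_one]
  have hgen : ∀ y, vecMulVec (y ᵥ* M) (y ᵥ* M) = Mᵀ * vecMulVec y y * M := by
    intro y
    rw [← vecMulVec_mul, ← mulVec_transpose, ← mul_vecMulVec, mul_assoc]
  have hA' : (Mᵀ * A * M).IsSymm := by
    simp [IsSymm, transpose_mul, hA.eq, mul_assoc]
  simpa only [Submodule.map_span, Set.image_image, hgen, hΦ] using
    Submodule.mem_map_of_mem (f := Φ) (hY _ hA')

/-- Pairing with `D` in the trace form kills every `x xᵀ`, hence `D` itself, so `tr (Dᵀ D) = 0`. -/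
theorem SpansSymm.eq_zero_of_dotProduct_mulVec_eq_zero {X : Set (ι → ℝ)} (hX : SpansSymm X)
    {D : Matrix ι ι ℝ} (hD : D.IsSymm) (h : ∀ x ∈ X, x ⬝ᵥ (D *ᵥ x) = 0) : D = 0 := by
  let F : Matrix ι ι ℝ →ₗ[ℝ] ℝ := traceLinearMap ι ℝ ℝ ∘ₗ LinearMap.mulLeft ℝ D
  have hF : Submodule.span ℝ ((fun x => vecMulVec x x) '' X) ≤ LinearMap.ker F := by
    rw [Submodule.span_le]
    rintro _ ⟨x, hx, rfl⟩
    simp [F, mul_vecMulVec, trace_vecMulVec, dotProduct_comm, h x hx]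
  have hDD : (Dᴴ * D).trace = 0 := by
    simpa [F, conjTranspose_eq_transpose_of_trivial, hD.eq] using hF (hX D hD)
  exact trace_conjTranspose_mul_self_eq_zero_iff.1 hDD

theorem SpansSymm.mem_span_rat {C : Set (ι → ℤ)}
    (hC : SpansSymm (((Int.cast : ℤ → ℝ) ∘ ·) '' C)) {G : Matrix ι ι ℝ} (hG : G.IsSymm) {m : ℝ}
    (hGC : ∀ z ∈ C, (Int.cast ∘ z) ⬝ᵥ (G *ᵥ (Int.cast ∘ z)) = m) (i j : ι) :
    G i j ∈ Submodule.span ℚ {m} := by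
  by_contra hij
  obtain ⟨f, hfG, hfm⟩ := Submodule.exists_le_ker_of_notMem hij
  let φ : ℝ →+ ℝ := (Rat.castHom ℝ).toAddMonoidHom.comp f.toAddMonoidHom
  have hφ : G.map φ = 0 := by
    refine hC.eq_zero_of_dotProduct_mulVec_eq_zero (hG.map φ) ?_
    rintro _ ⟨z, hz, rfl⟩
    rw [φ.intCast_dotProduct_map_mulVec, hGC z hz]
    simpa [φ] using hfm (Submodule.mem_span_singleton_self m)
  exact hfG (by simpa [φ] using congrFun (congrFun hφ i) j)

end Finite

theorem Rat.exists_pos_nat_mul_eq_intCast {ι : Type*} [Fintype ι] (q : ι → ℚ) :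
    ∃ d : ℕ, 0 < d ∧ ∀ i, ∃ k : ℤ, (d : ℚ) * q i = k := by
  refine ⟨∏ i, (q i).den, Finset.prod_pos fun i _ => (q i).den_pos, fun i => ?_⟩
  obtain ⟨t, ht⟩ := Finset.dvd_prod_of_mem (fun i => (q i).den) (Finset.mem_univ i)
  refine ⟨t * (q i).num, ?_⟩
  rw [ht]
  push_cast
  rw [mul_comm ((q i).den : ℚ), mul_assoc, Rat.den_mul_eq_num]

theorem exists_pos_mul_eq_intCast_of_mem_span_rat {ι : Type*} [Fintype ι] {m : ℝ} (hm : 0 < m)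
    {G : Matrix ι ι ℝ} (hG : ∀ i j, G i j ∈ Submodule.span ℚ {m}) :
    ∃ α : ℝ, 0 < α ∧ ∃ K : Matrix ι ι ℤ, ∀ i j, α * G i j = K i j := by
  choose q hq using fun i j => Submodule.mem_span_singleton.1 (hG i j)
  obtain ⟨d, hd, hk⟩ := Rat.exists_pos_nat_mul_eq_intCast (Function.uncurry q)
  choose k hk using hk
  refine ⟨d / m, by positivity, Matrix.of fun i j => k (i, j), fun i j => ?_⟩
  calc d / m * G i j = d * q i j := by rw [← hq i j, Rat.smul_def]; field_simp
    _ = k (i, j) := mod_cast hk (i, j)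

theorem mul_intCast_dotProduct_mulVec {ι : Type*} [Fintype ι] {α : ℝ} {G : Matrix ι ι ℝ}
    {K : Matrix ι ι ℤ} (hK : ∀ i j, α * G i j = K i j) (z w : ι → ℤ) :
    α * ((Int.cast ∘ z) ⬝ᵥ (G *ᵥ (Int.cast ∘ w))) = ((z ⬝ᵥ (K *ᵥ w) : ℤ) : ℝ) := by
  simp only [dotProduct, mulVec, mul_sum, Function.comp_apply, Int.cast_sum, Int.cast_mul, ← hK]
  refine Finset.sum_congr rfl fun i _ => Finset.sum_congr rfl fun j _ => by ring

theorem vecMul_dotProduct_vecMul {ι κ R : Type*} [Fintype ι] [Fintype κ] [CommSemiring R]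
    (M : Matrix ι κ R) (v w : ι → R) : (v ᵥ* M) ⬝ᵥ (w ᵥ* M) = v ⬝ᵥ ((M * Mᵀ) *ᵥ w) := by
  rw [← mulVec_mulVec, mulVec_transpose, dotProduct_mulVec]

theorem mem_span_int_range_iff_exists_vecMul {ι κ R : Type*} [Fintype ι] [Ring R]
    (b : ι → κ → R) (x : κ → R) :
    x ∈ Submodule.span ℤ (Set.range b) ↔ ∃ z : ι → ℤ, (Int.cast ∘ z) ᵥ* Matrix.of b = x := by
  rw [Submodule.mem_span_range_iff_exists_fun]
  simp only [vecMul_eq_sum, Function.comp_apply, Int.cast_smul_eq_zsmul]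
  rfl

theorem exists_similarity_of_mul_dotProduct_eq_intCast {n : ℕ} (L : Submodule ℤ (Fin n → ℝ))
    {α : ℝ} (hα : 0 < α) (hL : ∀ x ∈ L, ∀ y ∈ L, ∃ k : ℤ, α * (x ⬝ᵥ y) = k) :
    ∃ (σ : (Fin n → ℝ) ≃ₗ[ℝ] (Fin n → ℝ)) (α : ℝ), 0 < α ∧
      (∀ x y : Fin n → ℝ, σ x ⬝ᵥ σ y = α * (x ⬝ᵥ y)) ∧
      (∀ x ∈ L, ∀ y ∈ L, ∃ k : ℤ, σ x ⬝ᵥ σ y = (k : ℝ)) := by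
  have hσ : ∀ x y : Fin n → ℝ, (√α • x) ⬝ᵥ (√α • y) = α * (x ⬝ᵥ y) := fun x y => by
    rw [smul_dotProduct, dotProduct_smul, smul_eq_mul, smul_eq_mul, ← mul_assoc,
      Real.mul_self_sqrt hα.le]
  refine ⟨LinearEquiv.smulOfNeZero ℝ _ √α (Real.sqrt_pos.2 hα).ne', α, hα, hσ, ?_⟩
  intro x hx y hy
  simpa only [LinearEquiv.smulOfNeZero_apply, hσ] using hL x hx y hy

/-- Every perfect lattice is similar to an integral lattice. -/
theorem stmt0 {n : ℕ} (L : Submodule ℤ (Fin n → ℝ)) (hL : IsLat L)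
    (m : ℝ) (hm : IsLeast {r : ℝ | ∃ x ∈ L, x ≠ 0 ∧ x ⬝ᵥ x = r} m)
    (hperfect : ∀ A : Matrix (Fin n) (Fin n) ℝ, A.IsSymm →
      A ∈ Submodule.span ℝ ((fun x => vecMulVec x x) '' {x : Fin n → ℝ | x ∈ L ∧ x ⬝ᵥ x = m})) :
    ∃ (σ : (Fin n → ℝ) ≃ₗ[ℝ] (Fin n → ℝ)) (α : ℝ), 0 < α ∧
      (∀ x y : Fin n → ℝ, σ x ⬝ᵥ σ y = α * (x ⬝ᵥ y)) ∧
      (∀ x ∈ L, ∀ y ∈ L, ∃ k : ℤ, σ x ⬝ᵥ σ y = (k : ℝ)) := by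
  obtain ⟨b, rfl⟩ := hL
  obtain ⟨⟨x₀, -, hx₀, hx₀m⟩, -⟩ := hm
  have hm_pos : 0 < m := hx₀m ▸ by simpa using dotProduct_self_star_pos_iff.2 hx₀
  set M := Matrix.of ⇑b
  have hM : IsUnit M.det :=
    (isUnit_iff_isUnit_det M).1 (linearIndependent_rows_iff_isUnit.1 b.linearIndependent)
  have hC : SpansSymm (((Int.cast : ℤ → ℝ) ∘ ·) ''
      {z | (Int.cast ∘ z) ⬝ᵥ ((M * Mᵀ) *ᵥ (Int.cast ∘ z)) = m}) := by
    refine (SpansSymm.mono hperfect ?_).of_image_vecMul hM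
    rintro x ⟨hx, hxm⟩
    obtain ⟨z, rfl⟩ := (mem_span_int_range_iff_exists_vecMul _ _).1 hx
    exact ⟨_, ⟨z, (vecMul_dotProduct_vecMul M _ _).symm.trans hxm, rfl⟩, rfl⟩
  obtain ⟨α, hα, K, hK⟩ := exists_pos_mul_eq_intCast_of_mem_span_rat hm_pos
    (hC.mem_span_rat (isSymm_mul_transpose_self M) fun _ hz => hz)
  refine exists_similarity_of_mul_dotProduct_eq_intCast _ hα fun x hx y hy => ?_
  obtain ⟨z, rfl⟩ := (mem_span_int_range_iff_exists_vecMul _ _).1 hx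
  obtain ⟨w, rfl⟩ := (mem_span_int_range_iff_exists_vecMul _ _).1 hy
  exact ⟨_, by rw [vecMul_dotProduct_vecMul, mul_intCast_dotProduct_mulVec hK]⟩
end

section
/- Let L be a lattice in ℝ^n whose automorphism group acts irreducibly on ℝ^n. Then L is strongly eutactic, i.e., ∑_{x∈Min(L)} x·xᵀ = (min(L)|Min(L)|/n)·I_n. -/
open Matrix Finset

/-- `σ` is an automorphism of the lattice `L`: an orthogonal map preserving `L`. -/
def IsAut {n : ℕ} (L : Submodule ℤ (Fin n → ℝ)) (σ : (Fin n → ℝ) ≃ₗ[ℝ] (Fin n → ℝ)) : Prop :=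
  (∀ x y : Fin n → ℝ, σ x ⬝ᵥ σ y = x ⬝ᵥ y) ∧ (∀ x : Fin n → ℝ, x ∈ L ↔ σ x ∈ L)

/-!
Automorphisms of `L` permute the minimal vectors, so the symmetric matrix `A = ∑ x xᵀ` over
`Min(L)` commutes with every automorphism. Any eigenspace of `A` is then a nonzero invariant
subspace, hence all of ℝⁿ by irreducibility (Schur's lemma), so `A` is a scalar matrix; the
scalar is read off from `trace A = ∑ x ⬝ᵥ x = min(L) |Min(L)|`.
-/

namespace Module.End

theorem eq_smul_one_of_hasEigenvalue_of_irreducible {R V : Type*} [CommRing R]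
    [AddCommGroup V] [Module R V] (P : (V ≃ₗ[R] V) → Prop)
    (hirr : ∀ W : Submodule R V, (∀ σ, P σ → ∀ w ∈ W, σ w ∈ W) → W = ⊥ ∨ W = ⊤)
    {f : End R V} (hcomm : ∀ σ, P σ → ∀ v, f (σ v) = σ (f v))
    {μ : R} (hμ : f.HasEigenvalue μ) : f = μ • 1 := by
  have hinv : ∀ σ, P σ → ∀ w ∈ f.eigenspace μ, σ w ∈ f.eigenspace μ := by
    intro σ hσ w hw
    rw [mem_eigenspace_iff] at hw ⊢
    rw [hcomm σ hσ, hw, map_smul]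
  have htop : f.eigenspace μ = ⊤ := (hirr _ hinv).resolve_left hμ
  ext v
  simpa using mem_eigenspace_iff.mp (htop ▸ Submodule.mem_top : v ∈ f.eigenspace μ)

end Module.End

namespace Matrix

variable {ι : Type*} [Fintype ι]

theorem sum_vecMulVec_self_mulVec_map {R : Type*} [CommRing R] (X : Finset (ι → R))
    (σ : (ι → R) ≃ₗ[R] (ι → R)) (hσ : ∀ x y, σ x ⬝ᵥ σ y = x ⬝ᵥ y)
    (hX : ∀ x, σ x ∈ X ↔ x ∈ X) (v : ι → R) :
    (∑ x ∈ X, vecMulVec x x) *ᵥ σ v = σ ((∑ x ∈ X, vecMulVec x x) *ᵥ v) := by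
  simp only [sum_mulVec, vecMulVec_mulVec, op_smul_eq_smul, map_sum, map_smul]
  exact (Finset.sum_equiv σ.toEquiv (fun x => (hX x).symm) fun x _ => by simp [hσ]).symm

variable [DecidableEq ι]

theorem IsHermitian.hasEigenvalue_mulVecLin {𝕜 : Type*} [RCLike 𝕜] {A : Matrix ι ι 𝕜}
    (hA : A.IsHermitian) (i : ι) :
    Module.End.HasEigenvalue A.mulVecLin (hA.eigenvalues i : 𝕜) := by
  refine Module.End.hasEigenvalue_of_hasEigenvector (x := ⇑(hA.eigenvectorBasis i)) ⟨?_, ?_⟩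
  · rw [Module.End.mem_eigenspace_iff, mulVecLin_apply, hA.mulVec_eigenvectorBasis,
      RCLike.real_smul_eq_coe_smul (K := 𝕜)]
  · intro h
    exact hA.eigenvectorBasis.toBasis.ne_zero i (WithLp.ofLp_injective 2 h)

theorem IsHermitian.exists_eq_smul_one_of_irreducible {𝕜 : Type*} [RCLike 𝕜]
    {A : Matrix ι ι 𝕜} (hA : A.IsHermitian) (P : ((ι → 𝕜) ≃ₗ[𝕜] (ι → 𝕜)) → Prop)
    (hirr : ∀ W : Submodule 𝕜 (ι → 𝕜), (∀ σ, P σ → ∀ w ∈ W, σ w ∈ W) → W = ⊥ ∨ W = ⊤)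
    (hcomm : ∀ σ, P σ → ∀ v, A *ᵥ σ v = σ (A *ᵥ v)) :
    ∃ c : 𝕜, A = c • 1 := by
  cases isEmpty_or_nonempty ι with
  | inl _ => exact ⟨0, Subsingleton.elim _ _⟩
  | inr hι =>
    obtain ⟨i⟩ := hι
    refine ⟨hA.eigenvalues i, toLin'.injective ?_⟩
    rw [map_smul, toLin'_one, toLin'_apply']
    exact Module.End.eq_smul_one_of_hasEigenvalue_of_irreducible P hirr hcomm
      (hA.hasEigenvalue_mulVecLin i)

theorem eq_trace_div_smul_one {K : Type*} [Field K] [CharZero K] {A : Matrix ι ι K} {c : K}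
    (hA : A = c • 1) : A = (A.trace / Fintype.card ι) • 1 := by
  cases isEmpty_or_nonempty ι with
  | inl _ => exact Subsingleton.elim _ _
  | inr _ =>
    conv_rhs => rw [hA, trace_smul, trace_one, smul_eq_mul, mul_div_cancel_right₀ _
      (Nat.cast_ne_zero.mpr Fintype.card_ne_zero)]
    exact hA

end Matrix

theorem stmt3_general {n : ℕ} (L : Submodule ℤ (Fin n → ℝ)) (m : ℝ)
    (X : Finset (Fin n → ℝ)) (hX : ∀ x, x ∈ X ↔ x ∈ L ∧ x ⬝ᵥ x = m)
    (hirr : ∀ W : Submodule ℝ (Fin n → ℝ),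
      (∀ σ : (Fin n → ℝ) ≃ₗ[ℝ] (Fin n → ℝ), IsAut L σ → ∀ w ∈ W, σ w ∈ W) →
      W = ⊥ ∨ W = ⊤) :
    ∑ x ∈ X, vecMulVec x x = (m * X.card / n) • (1 : Matrix (Fin n) (Fin n) ℝ) := by
  set A := ∑ x ∈ X, vecMulVec x x
  have hA : A.IsHermitian :=
    (posSemidef_sum X fun x _ => by simpa using posSemidef_vecMulVec_self_star x).isHermitian
  have hcomm : ∀ σ, IsAut L σ → ∀ v, A *ᵥ σ v = σ (A *ᵥ v) := fun σ hσ =>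
    sum_vecMulVec_self_mulVec_map X σ hσ.1 fun x => by rw [hX, hX, ← hσ.2, hσ.1]
  have htrace : A.trace = m * X.card := by
    rw [trace_sum, Finset.sum_congr rfl fun x hx => by rw [trace_vecMulVec, ((hX x).1 hx).2],
      sum_const, nsmul_eq_mul, mul_comm]
  obtain ⟨c, hc⟩ := hA.exists_eq_smul_one_of_irreducible _ hirr hcomm
  rw [eq_trace_div_smul_one hc, htrace, Fintype.card_fin]

/-- If the automorphism group of a lattice `L` acts irreducibly on ℝⁿ, then `L`
is strongly eutactic: `∑_{x ∈ Min(L)} x·xᵀ = (min(L)|Min(L)|/n)·I`. -/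
theorem stmt3 {n : ℕ} (hn : 0 < n) (L : Submodule ℤ (Fin n → ℝ)) (hL : IsLat L)
    (m : ℝ) (hm : IsLeast {r : ℝ | ∃ x ∈ L, x ≠ 0 ∧ x ⬝ᵥ x = r} m)
    (X : Finset (Fin n → ℝ)) (hX : ∀ x, x ∈ X ↔ x ∈ L ∧ x ⬝ᵥ x = m)
    (hirr : ∀ W : Submodule ℝ (Fin n → ℝ),
      (∀ σ : (Fin n → ℝ) ≃ₗ[ℝ] (Fin n → ℝ), IsAut L σ → ∀ w ∈ W, σ w ∈ W) →
      W = ⊥ ∨ W = ⊤) :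
    ∑ x ∈ X, vecMulVec x x = (m * X.card / n) • (1 : Matrix (Fin n) (Fin n) ℝ) :=
  stmt3_general L m X hX hirr
end

section
/- Every strongly perfect lattice is perfect. -/
open Matrix Finset

/-!
Polarizing the fourth-moment identity `∑_{x ∈ X} (x·α)⁴ = 3c (α·α)²` gives the frame identity
`∑_{x ∈ X} (x·α)² x xᵀ = c ((α·α) I + 2 α αᵀ)`, whose left side lies in the span `S` of the
`x xᵀ`. Summing it over the standard basis puts `I` in `S` (as `c ≠ 0`), hence every `α αᵀ`,
and the `α αᵀ` span the symmetric matrices.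
-/

theorem Matrix.IsSymm.mem_span_vecMulVec_self {K ι : Type*} [Field K] [NeZero (2 : K)]
    [Fintype ι] [DecidableEq ι] {A : Matrix ι ι K} (hA : A.IsSymm) :
    A ∈ Submodule.span K (Set.range fun v : ι → K => vecMulVec v v) := by
  set V := Submodule.span K (Set.range fun v : ι → K => vecMulVec v v)
  have hsq : ∀ v, vecMulVec v v ∈ V := fun v => Submodule.subset_span ⟨v, rfl⟩
  have hpolar : ∀ v w, vecMulVec v w + vecMulVec w v ∈ V := by
    intro v w
    have : vecMulVec v w + vecMulVec w v
        = vecMulVec (v + w) (v + w) - vecMulVec v v - vecMulVec w w := by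
      simp only [add_vecMulVec, vecMulVec_add]; abel
    rw [this]
    exact sub_mem (sub_mem (hsq _) (hsq _)) (hsq _)
  have htwo : (2 : K) • A = ∑ i, ∑ j, A i j • (vecMulVec (Pi.single i 1) (Pi.single j 1)
      + vecMulVec (Pi.single j 1) (Pi.single i 1)) := by
    ext k l
    simp only [Matrix.smul_apply, smul_eq_mul, smul_add, sum_add_distrib, Matrix.sum_apply,
      Matrix.add_apply, vecMulVec_apply, Pi.single_apply, mul_ite, mul_one, mul_zero, sum_ite_eq,
      mem_univ, ↓reduceIte, sum_ite_irrel, sum_const_zero, hA.apply k l]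
    ring
  have : (2 : K) • A ∈ V := htwo ▸ sum_mem fun i _ => sum_mem fun j _ => V.smul_mem _ (hpolar _ _)
  exact (V.smul_mem_iff two_ne_zero).mp this

section QuarticDesign

variable {K ι : Type*} [Field K] [CharZero K] [Fintype ι] {X : Finset (ι → K)} {c : K}

theorem sum_dotProduct_sq_mul_sq
    (hD4 : ∀ α : ι → K, ∑ x ∈ X, (x ⬝ᵥ α) ^ 4 = 3 * c * (α ⬝ᵥ α) ^ 2) (α β : ι → K) :
    ∑ x ∈ X, (x ⬝ᵥ α) ^ 2 * (x ⬝ᵥ β) ^ 2 = c * ((α ⬝ᵥ α) * (β ⬝ᵥ β) + 2 * (α ⬝ᵥ β) ^ 2) := by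
  refine mul_left_cancel₀ (by norm_num : (12 : K) ≠ 0) ?_
  calc (12 : K) * ∑ x ∈ X, (x ⬝ᵥ α) ^ 2 * (x ⬝ᵥ β) ^ 2
      = ∑ x ∈ X, (x ⬝ᵥ (α + β)) ^ 4 + ∑ x ∈ X, (x ⬝ᵥ (α - β)) ^ 4
        - 2 * ∑ x ∈ X, (x ⬝ᵥ α) ^ 4 - 2 * ∑ x ∈ X, (x ⬝ᵥ β) ^ 4 := by
        simp only [mul_sum, dotProduct_add, dotProduct_sub, ← sum_add_distrib, ← sum_sub_distrib]
        exact sum_congr rfl fun x _ => by ring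
    _ = 3 * c * (((α + β) ⬝ᵥ (α + β)) ^ 2 + ((α - β) ⬝ᵥ (α - β)) ^ 2
        - 2 * (α ⬝ᵥ α) ^ 2 - 2 * (β ⬝ᵥ β) ^ 2) := by
        rw [hD4, hD4, hD4, hD4]; ring
    _ = 12 * (c * ((α ⬝ᵥ α) * (β ⬝ᵥ β) + 2 * (α ⬝ᵥ β) ^ 2)) := by
        simp only [dotProduct_add, add_dotProduct, dotProduct_sub, sub_dotProduct,
          dotProduct_comm β α]
        ring

theorem sum_dotProduct_sq_mul_mul
    (hD4 : ∀ α : ι → K, ∑ x ∈ X, (x ⬝ᵥ α) ^ 4 = 3 * c * (α ⬝ᵥ α) ^ 2) (α β γ : ι → K) :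
    ∑ x ∈ X, (x ⬝ᵥ α) ^ 2 * ((x ⬝ᵥ β) * (x ⬝ᵥ γ))
      = c * ((α ⬝ᵥ α) * (β ⬝ᵥ γ) + 2 * (α ⬝ᵥ β) * (α ⬝ᵥ γ)) := by
  refine mul_left_cancel₀ (two_ne_zero : (2 : K) ≠ 0) ?_
  calc (2 : K) * ∑ x ∈ X, (x ⬝ᵥ α) ^ 2 * ((x ⬝ᵥ β) * (x ⬝ᵥ γ))
      = ∑ x ∈ X, (x ⬝ᵥ α) ^ 2 * (x ⬝ᵥ (β + γ)) ^ 2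
        - ∑ x ∈ X, (x ⬝ᵥ α) ^ 2 * (x ⬝ᵥ β) ^ 2 - ∑ x ∈ X, (x ⬝ᵥ α) ^ 2 * (x ⬝ᵥ γ) ^ 2 := by
        simp only [mul_sum, dotProduct_add, ← sum_sub_distrib]
        exact sum_congr rfl fun x _ => by ring
    _ = 2 * (c * ((α ⬝ᵥ α) * (β ⬝ᵥ γ) + 2 * (α ⬝ᵥ β) * (α ⬝ᵥ γ))) := by
        rw [sum_dotProduct_sq_mul_sq hD4, sum_dotProduct_sq_mul_sq hD4,
          sum_dotProduct_sq_mul_sq hD4]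
        simp only [dotProduct_add, add_dotProduct, dotProduct_comm γ β]
        ring

theorem sum_dotProduct_sq_smul_vecMulVec [DecidableEq ι]
    (hD4 : ∀ α : ι → K, ∑ x ∈ X, (x ⬝ᵥ α) ^ 4 = 3 * c * (α ⬝ᵥ α) ^ 2) (α : ι → K) :
    ∑ x ∈ X, (x ⬝ᵥ α) ^ 2 • vecMulVec x x = c • ((α ⬝ᵥ α) • 1 + (2 : K) • vecMulVec α α) := by
  ext i j
  have := sum_dotProduct_sq_mul_mul hD4 α (Pi.single i 1) (Pi.single j 1)
  simp only [dotProduct_single_one, Pi.single_apply, eq_comm (a := j)] at this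
  simp only [Matrix.sum_apply, Matrix.smul_apply, vecMulVec_apply, smul_eq_mul, this,
    Matrix.add_apply, one_apply, mul_ite, mul_one, mul_zero]
  ring

theorem Matrix.IsSymm.mem_span_vecMulVec_of_sum_dotProduct_pow_four [DecidableEq ι] (hc : c ≠ 0)
    (hD4 : ∀ α : ι → K, ∑ x ∈ X, (x ⬝ᵥ α) ^ 4 = 3 * c * (α ⬝ᵥ α) ^ 2)
    {A : Matrix ι ι K} (hA : A.IsSymm) :
    A ∈ Submodule.span K ((fun x => vecMulVec x x) '' (X : Set (ι → K))) := by
  set S := Submodule.span K ((fun x => vecMulVec x x) '' (X : Set (ι → K)))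
  have hframe : ∀ α : ι → K, (α ⬝ᵥ α) • (1 : Matrix ι ι K) + (2 : K) • vecMulVec α α ∈ S := by
    intro α
    rw [← S.smul_mem_iff hc, ← sum_dotProduct_sq_smul_vecMulVec hD4]
    exact sum_mem fun x hx => S.smul_mem _ (Submodule.subset_span ⟨x, hx, rfl⟩)
  have hone : (1 : Matrix ι ι K) ∈ S := by
    have hsum : ∑ k : ι, ((Pi.single k (1 : K) ⬝ᵥ Pi.single k 1) • (1 : Matrix ι ι K)
        + (2 : K) • vecMulVec (Pi.single k (1 : K)) (Pi.single k 1))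
        = ((Fintype.card ι : K) + 2) • (1 : Matrix ι ι K) := by
      simp only [single_one_dotProduct, Pi.single_eq_same, one_smul, sum_add_distrib,
        ← single_eq_single_vecMulVec_single, ← smul_sum, sum_single_one, sum_const, card_univ,
        add_smul, Nat.cast_smul_eq_nsmul]
    have hdim : (Fintype.card ι : K) + 2 ≠ 0 := by norm_cast
    rw [← S.smul_mem_iff hdim, ← hsum]
    exact sum_mem fun k _ => hframe (Pi.single k 1)
  have hsq : ∀ α : ι → K, vecMulVec α α ∈ S := by
    intro α
    have := S.sub_mem (hframe α) (S.smul_mem (α ⬝ᵥ α) hone)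
    rwa [add_sub_cancel_left, S.smul_mem_iff two_ne_zero] at this
  exact Submodule.span_le.mpr (Set.range_subset_iff.mpr hsq) hA.mem_span_vecMulVec_self

end QuarticDesign

theorem stmt4_general {n : ℕ} (hn : 0 < n) (L : Submodule ℤ (Fin n → ℝ))
    (m : ℝ) (hm : IsLeast {r : ℝ | ∃ x ∈ L, x ≠ 0 ∧ x ⬝ᵥ x = r} m)
    (X : Finset (Fin n → ℝ)) (hX : ∀ x, x ∈ X ↔ x ∈ L ∧ x ⬝ᵥ x = m)
    (hD4 : ∀ α : Fin n → ℝ,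
      ∑ x ∈ X, (x ⬝ᵥ α) ^ 4 = (3 * X.card * m ^ 2 / (n * (n + 2))) * (α ⬝ᵥ α) ^ 2) :
    ∀ A : Matrix (Fin n) (Fin n) ℝ, A.IsSymm →
      A ∈ Submodule.span ℝ ((fun x => vecMulVec x x) '' (X : Set (Fin n → ℝ))) := by
  intro A hA
  obtain ⟨x₀, hx₀L, hx₀, hx₀m⟩ := hm.1
  have hm0 : m ≠ 0 := hx₀m ▸ mt dotProduct_self_eq_zero.mp hx₀
  have hcard : (X.card : ℝ) ≠ 0 :=
    Nat.cast_ne_zero.mpr (card_ne_zero_of_mem ((hX x₀).mpr ⟨hx₀L, hx₀m⟩))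
  refine hA.mem_span_vecMulVec_of_sum_dotProduct_pow_four
    (c := X.card * m ^ 2 / (n * (n + 2))) (by positivity) fun α => ?_
  rw [hD4]
  ring

/-- Every strongly perfect lattice (its minimal vectors form a spherical
4-design, expressed by the moment equations (D2) and (D4)) is perfect: the
rank-one matrices `x·xᵀ`, `x ∈ Min(L)`, span the symmetric matrices. -/
theorem stmt4 {n : ℕ} (hn : 0 < n) (L : Submodule ℤ (Fin n → ℝ)) (hL : IsLat L)
    (m : ℝ) (hm : IsLeast {r : ℝ | ∃ x ∈ L, x ≠ 0 ∧ x ⬝ᵥ x = r} m)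
    (X : Finset (Fin n → ℝ)) (hX : ∀ x, x ∈ X ↔ x ∈ L ∧ x ⬝ᵥ x = m)
    (hD2 : ∀ α : Fin n → ℝ, ∑ x ∈ X, (x ⬝ᵥ α) ^ 2 = (X.card * m / n) * (α ⬝ᵥ α))
    (hD4 : ∀ α : Fin n → ℝ,
      ∑ x ∈ X, (x ⬝ᵥ α) ^ 4 = (3 * X.card * m ^ 2 / (n * (n + 2))) * (α ⬝ᵥ α) ^ 2) :
    ∀ A : Matrix (Fin n) (Fin n) ℝ, A.IsSymm →
      A ∈ Submodule.span ℝ ((fun x => vecMulVec x x) '' (X : Set (Fin n → ℝ))) :=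
  stmt4_general hn L m hm X hX hD4
end

section
/- Let X ⊂ S^{n-1}(m) be a finite antipodal set such that there is a constant c with ∑_{x∈X}(x,α)⁴ = c(α,α)² for all α ∈ ℝ^n. Then the rank-one matrices {x·xᵀ : x ∈ X} span the space of symmetric n×n real matrices. -/
/-!
Polarizing the design identity gives the fourth moments
`∑ₓ xᵢ xⱼ xₖ xₗ = (c/3) (δᵢⱼ δₖₗ + δᵢₖ δⱼₗ + δᵢₗ δⱼₖ)`, hence for every matrix `C`
`∑ₓ (xᵀ C x) x xᵀ = (c/3) (tr C • 1 + C + Cᵀ)`, whose left side lies in the span of the `x xᵀ`.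
As soon as `c ≠ 0` (forced by any nonzero point of `X`), taking `C = 1` puts `1` in the span,
and then taking `C = A` symmetric puts `A` in it.
-/

open Matrix Finset

variable {n : ℕ}

def IsQuarticDesign (X : Finset (Fin n → ℝ)) (c : ℝ) : Prop :=
  ∀ α : Fin n → ℝ, ∑ x ∈ X, (x ⬝ᵥ α) ^ 4 = c * (α ⬝ᵥ α) ^ 2

theorem sum_mul_dotProduct_mul_dotProduct (X : Finset (Fin n → ℝ)) (w : (Fin n → ℝ) → ℝ)
    (β γ : Fin n → ℝ) :
    ∑ x ∈ X, w x * ((x ⬝ᵥ β) * (x ⬝ᵥ γ)) =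
      (∑ x ∈ X, w x * (x ⬝ᵥ (β + γ)) ^ 2 - ∑ x ∈ X, w x * (x ⬝ᵥ (β - γ)) ^ 2) / 4 := by
  rw [← sum_sub_distrib, sum_div]
  refine sum_congr rfl fun x _ => ?_
  simp only [dotProduct_add, dotProduct_sub]
  ring

theorem sum_smul_vecMulVec_mem_span (X : Finset (Fin n → ℝ)) (f : (Fin n → ℝ) → ℝ) :
    ∑ x ∈ X, f x • vecMulVec x x ∈
      Submodule.span ℝ ((fun x => vecMulVec x x) '' (X : Set (Fin n → ℝ))) :=
  Submodule.sum_mem _ fun x hx => Submodule.smul_mem _ _ (Submodule.subset_span ⟨x, hx, rfl⟩)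

namespace IsQuarticDesign

variable {X : Finset (Fin n → ℝ)} {c : ℝ}

theorem pos_of_mem (hc : IsQuarticDesign X c) {x : Fin n → ℝ} (hx : x ∈ X) (hx0 : x ≠ 0) :
    0 < c := by
  have hsq : 0 < (x ⬝ᵥ x) ^ 2 := by
    have : x ⬝ᵥ x ≠ 0 := dotProduct_self_eq_zero.not.mpr hx0
    positivity
  have hle : (x ⬝ᵥ x) ^ 2 * (x ⬝ᵥ x) ^ 2 ≤ c * (x ⬝ᵥ x) ^ 2 := by
    rw [← hc, ← pow_add]
    exact single_le_sum (f := fun y => (y ⬝ᵥ x) ^ 4) (fun _ _ => by positivity) hx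
  exact hsq.trans_le (le_of_mul_le_mul_right hle hsq)

theorem sum_sq_mul_sq (hc : IsQuarticDesign X c) (α β : Fin n → ℝ) :
    ∑ x ∈ X, (x ⬝ᵥ α) ^ 2 * (x ⬝ᵥ β) ^ 2 =
      c / 3 * ((α ⬝ᵥ α) * (β ⬝ᵥ β) + 2 * (α ⬝ᵥ β) ^ 2) := by
  have expand : ∑ x ∈ X, (x ⬝ᵥ (α + β)) ^ 4 + ∑ x ∈ X, (x ⬝ᵥ (α - β)) ^ 4 =
      2 * ∑ x ∈ X, (x ⬝ᵥ α) ^ 4 + 12 * ∑ x ∈ X, (x ⬝ᵥ α) ^ 2 * (x ⬝ᵥ β) ^ 2 +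
        2 * ∑ x ∈ X, (x ⬝ᵥ β) ^ 4 := by
    simp only [mul_sum, ← sum_add_distrib]
    refine sum_congr rfl fun x _ => ?_
    simp only [dotProduct_add, dotProduct_sub]
    ring
  rw [hc, hc, hc, hc] at expand
  simp only [add_dotProduct, sub_dotProduct, dotProduct_add, dotProduct_sub,
    dotProduct_comm β α] at expand
  linear_combination -expand / 12

theorem sum_mul_mul_sq (hc : IsQuarticDesign X c) (α β γ : Fin n → ℝ) :
    ∑ x ∈ X, (x ⬝ᵥ α) * (x ⬝ᵥ β) * (x ⬝ᵥ γ) ^ 2 =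
      c / 3 * ((α ⬝ᵥ β) * (γ ⬝ᵥ γ) + 2 * ((α ⬝ᵥ γ) * (β ⬝ᵥ γ))) := by
  rw [sum_congr rfl fun x _ => mul_comm _ _, sum_mul_dotProduct_mul_dotProduct,
    hc.sum_sq_mul_sq, hc.sum_sq_mul_sq]
  simp only [add_dotProduct, sub_dotProduct, dotProduct_add, dotProduct_sub,
    dotProduct_comm γ α, dotProduct_comm γ β, dotProduct_comm β α]
  ring

theorem sum_mul_mul_mul_mul (hc : IsQuarticDesign X c) (α β γ δ : Fin n → ℝ) :
    ∑ x ∈ X, (x ⬝ᵥ α) * (x ⬝ᵥ β) * ((x ⬝ᵥ γ) * (x ⬝ᵥ δ)) =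
      c / 3 * ((α ⬝ᵥ β) * (γ ⬝ᵥ δ) + (α ⬝ᵥ γ) * (β ⬝ᵥ δ) + (α ⬝ᵥ δ) * (β ⬝ᵥ γ)) := by
  rw [sum_mul_dotProduct_mul_dotProduct, hc.sum_mul_mul_sq, hc.sum_mul_mul_sq]
  simp only [add_dotProduct, sub_dotProduct, dotProduct_add, dotProduct_sub,
    dotProduct_comm δ γ]
  ring

theorem sum_apply_mul_apply (hc : IsQuarticDesign X c) (i j k l : Fin n) :
    ∑ x ∈ X, x i * x j * (x k * x l) =
      c / 3 * ((if i = j then 1 else 0) * (if k = l then 1 else 0) +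
        (if i = k then 1 else 0) * (if j = l then 1 else 0) +
        (if i = l then 1 else 0) * (if j = k then 1 else 0)) := by
  have h := hc.sum_mul_mul_mul_mul (Pi.single i 1) (Pi.single j 1) (Pi.single k 1)
    (Pi.single l 1)
  simp only [dotProduct_single, mul_one, Pi.single_apply] at h
  convert h using 2
  simp [eq_comm]

theorem sum_smul_vecMulVec (hc : IsQuarticDesign X c) (C : Matrix (Fin n) (Fin n) ℝ) :
    ∑ x ∈ X, (x ⬝ᵥ C *ᵥ x) • vecMulVec x x = (c / 3) • (C.trace • 1 + C + Cᵀ) := by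
  have quadratic_form (x : Fin n → ℝ) : x ⬝ᵥ C *ᵥ x = ∑ k, ∑ l, C k l * (x k * x l) := by
    simp only [dotProduct, mulVec, mul_sum]
    exact sum_congr rfl fun k _ => sum_congr rfl fun l _ => by ring
  ext i j
  simp only [Matrix.sum_apply, Matrix.smul_apply, Matrix.add_apply, vecMulVec_apply,
    transpose_apply, smul_eq_mul]
  calc ∑ x ∈ X, (x ⬝ᵥ C *ᵥ x) * (x i * x j)
      = ∑ k, ∑ l, C k l * ∑ x ∈ X, x k * x l * (x i * x j) := by
        simp only [quadratic_form, sum_mul, mul_sum]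
        rw [sum_comm]
        refine sum_congr rfl fun k _ => ?_
        rw [sum_comm]
        exact sum_congr rfl fun l _ => sum_congr rfl fun x _ => by ring
    _ = c / 3 * (C.trace * (1 : Matrix (Fin n) (Fin n) ℝ) i j + C i j + C j i) := by
        simp only [hc.sum_apply_mul_apply, one_apply, trace, Matrix.diag]
        simp [mul_add, mul_sum, sum_add_distrib, mul_ite, mul_comm _ (c / 3)]

theorem mem_span_vecMulVec (hc : IsQuarticDesign X c) (hc0 : c ≠ 0)
    {A : Matrix (Fin n) (Fin n) ℝ} (hA : A.IsSymm) :
    A ∈ Submodule.span ℝ ((fun x => vecMulVec x x) '' (X : Set (Fin n → ℝ))) := by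
  set S := Submodule.span ℝ ((fun x => vecMulVec x x) '' (X : Set (Fin n → ℝ)))
  have one_mem : (1 : Matrix (Fin n) (Fin n) ℝ) ∈ S := by
    have h := sum_smul_vecMulVec_mem_span X fun x => x ⬝ᵥ (1 : Matrix (Fin n) (Fin n) ℝ) *ᵥ x
    rwa [hc.sum_smul_vecMulVec, trace_one, transpose_one, Fintype.card_fin,
      show (n : ℝ) • (1 : Matrix (Fin n) (Fin n) ℝ) + 1 + 1 = ((n : ℝ) + 2) • 1 by module,
      smul_smul, S.smul_mem_iff (by positivity)] at h
  have h := sum_smul_vecMulVec_mem_span X fun x => x ⬝ᵥ A *ᵥ x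
  rwa [hc.sum_smul_vecMulVec, hA.eq, add_assoc, smul_add,
    S.add_mem_iff_right (S.smul_mem _ (S.smul_mem _ one_mem)), ← two_smul ℝ A, smul_smul,
    S.smul_mem_iff (by positivity)] at h

end IsQuarticDesign

theorem stmt5_general {n : ℕ} (m : ℝ) (hm : 0 < m) (X : Finset (Fin n → ℝ))
    (hne : X.Nonempty)
    (hnorm : ∀ x ∈ X, x ⬝ᵥ x = m) (c : ℝ)
    (hc : ∀ α : Fin n → ℝ, ∑ x ∈ X, (x ⬝ᵥ α) ^ 4 = c * (α ⬝ᵥ α) ^ 2) :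
    ∀ A : Matrix (Fin n) (Fin n) ℝ, A.IsSymm →
      A ∈ Submodule.span ℝ ((fun x => vecMulVec x x) '' (X : Set (Fin n → ℝ))) := by
  obtain ⟨x₀, hx₀⟩ := hne
  have hx₀0 : x₀ ≠ 0 := by
    rintro rfl
    exact hm.ne (by simpa using hnorm 0 hx₀)
  have hcpos : 0 < c := IsQuarticDesign.pos_of_mem hc hx₀ hx₀0
  exact fun A hA => IsQuarticDesign.mem_span_vecMulVec hc hcpos.ne' hA

/-- If a finite antipodal set `X ⊂ S^{n-1}(m)` (with `m > 0`) satisfies the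
degree-4 design condition `∑_{x∈X}(x,α)⁴ = c(α,α)²` for all `α`, then the
rank-one matrices `x·xᵀ`, `x ∈ X`, span the symmetric `n×n` matrices. -/
theorem stmt5 {n : ℕ} (m : ℝ) (hm : 0 < m) (X : Finset (Fin n → ℝ))
    (hne : X.Nonempty) (hanti : ∀ x ∈ X, -x ∈ X)
    (hnorm : ∀ x ∈ X, x ⬝ᵥ x = m) (c : ℝ)
    (hc : ∀ α : Fin n → ℝ, ∑ x ∈ X, (x ⬝ᵥ α) ^ 4 = c * (α ⬝ᵥ α) ^ 2) :
    ∀ A : Matrix (Fin n) (Fin n) ℝ, A.IsSymm →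
      A ∈ Submodule.span ℝ ((fun x => vecMulVec x x) '' (X : Set (Fin n → ℝ))) :=
  stmt5_general m hm X hne hnorm c hc
end

section
/- Let L be a strongly perfect lattice of dimension n. Then min(L)·min(L^♯) ≥ (n+2)/3. -/
/-! Take `α` a minimal vector of `L♯`. For every minimal vector `x` of `L` the number `(x, α)` is
an integer, so `(x, α)² ≤ (x, α)⁴`. Summing over `Min(L)` and evaluating both sides with (D2) and
(D4) gives `|Min L| m m' / n ≤ 3 |Min L| m² m'² / (n (n + 2))`, i.e. `m m' ≥ (n + 2) / 3`. -/

open Matrix Finset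

lemma Int.cast_sq_le_pow_four (k : ℤ) : (k : ℝ) ^ 2 ≤ (k : ℝ) ^ 4 := by
  have h := Int.le_self_sq (k ^ 2)
  calc (k : ℝ) ^ 2 ≤ ((k : ℝ) ^ 2) ^ 2 := by exact_mod_cast h
    _ = (k : ℝ) ^ 4 := by ring

lemma dotProduct_self_pos_of_ne_zero {ι : Type*} [Fintype ι] {v : ι → ℝ} (hv : v ≠ 0) : 0 < v ⬝ᵥ v := by
  simpa using dotProduct_star_self_pos_iff.2 hv

lemma sum_sq_le_sum_pow_four_of_int {ι : Type*} (s : Finset ι) (f : ι → ℝ)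
    (hf : ∀ i ∈ s, ∃ k : ℤ, f i = k) : ∑ i ∈ s, f i ^ 2 ≤ ∑ i ∈ s, f i ^ 4 :=
  sum_le_sum fun i hi => by
    obtain ⟨k, hk⟩ := hf i hi
    exact hk ▸ Int.cast_sq_le_pow_four k

lemma le_mul_dotProduct_self_of_design {n : ℕ} {X : Finset (Fin n → ℝ)} {m : ℝ} (hm : 0 < m)
    (hX : X.Nonempty)
    (hD2 : ∀ α : Fin n → ℝ, ∑ x ∈ X, (x ⬝ᵥ α) ^ 2 = (X.card * m / n) * (α ⬝ᵥ α))
    (hD4 : ∀ α : Fin n → ℝ,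
      ∑ x ∈ X, (x ⬝ᵥ α) ^ 4 = (3 * X.card * m ^ 2 / (n * (n + 2))) * (α ⬝ᵥ α) ^ 2)
    {α : Fin n → ℝ} (hα : α ≠ 0) (hα_int : ∀ x ∈ X, ∃ k : ℤ, x ⬝ᵥ α = k) :
    (n + 2) / 3 ≤ m * (α ⬝ᵥ α) := by
  have hn : (0 : ℝ) < n := by
    have : 0 < n := Nat.pos_of_ne_zero fun h => hα (by subst h; exact Subsingleton.elim _ _)
    exact_mod_cast this
  have hC : (0 : ℝ) < X.card := by exact_mod_cast hX.card_pos
  have ha := dotProduct_self_pos_of_ne_zero hα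
  have hsum := sum_sq_le_sum_pow_four_of_int X _ hα_int
  rw [hD2, hD4] at hsum
  have hscaled : (X.card * m / n * (α ⬝ᵥ α)) * ((n + 2) / 3)
      ≤ (X.card * m / n * (α ⬝ᵥ α)) * (m * (α ⬝ᵥ α)) :=
    calc _ ≤ (3 * X.card * m ^ 2 / (n * (n + 2)) * (α ⬝ᵥ α) ^ 2) * ((n + 2) / 3) := by gcongr
      _ = _ := by field_simp
  exact le_of_mul_le_mul_left hscaled (by positivity)

theorem stmt6_general {n : ℕ} (L Ldual : Submodule ℤ (Fin n → ℝ))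
    (hdual : ∀ x : Fin n → ℝ, x ∈ Ldual ↔ ∀ ℓ ∈ L, ∃ k : ℤ, x ⬝ᵥ ℓ = (k : ℝ))
    (m m' : ℝ)
    (hm : IsLeast {r : ℝ | ∃ x ∈ L, x ≠ 0 ∧ x ⬝ᵥ x = r} m)
    (hm' : IsLeast {r : ℝ | ∃ x ∈ Ldual, x ≠ 0 ∧ x ⬝ᵥ x = r} m')
    (X : Finset (Fin n → ℝ)) (hX : ∀ x, x ∈ X ↔ x ∈ L ∧ x ⬝ᵥ x = m)
    (hD2 : ∀ α : Fin n → ℝ, ∑ x ∈ X, (x ⬝ᵥ α) ^ 2 = (X.card * m / n) * (α ⬝ᵥ α))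
    (hD4 : ∀ α : Fin n → ℝ,
      ∑ x ∈ X, (x ⬝ᵥ α) ^ 4 = (3 * X.card * m ^ 2 / (n * (n + 2))) * (α ⬝ᵥ α) ^ 2) :
    m * m' ≥ (n + 2) / 3 := by
  obtain ⟨⟨x₀, hx₀L, hx₀, hx₀m⟩, -⟩ := hm
  obtain ⟨⟨α, hαL, hα, rfl⟩, -⟩ := hm'
  have hm_pos : 0 < m := hx₀m ▸ dotProduct_self_pos_of_ne_zero hx₀
  refine le_mul_dotProduct_self_of_design hm_pos ⟨x₀, (hX x₀).2 ⟨hx₀L, hx₀m⟩⟩ hD2 hD4 hα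
    fun x hx => ?_
  obtain ⟨k, hk⟩ := (hdual α).1 hαL x ((hX x).1 hx).1
  exact ⟨k, dotProduct_comm x α ▸ hk⟩

/-- For a strongly perfect lattice `L` of dimension `n` (minimal vectors satisfy
the design equations (D2) and (D4)), one has `min(L)·min(L♯) ≥ (n+2)/3`. -/
theorem stmt6 {n : ℕ} (hn : 0 < n) (L Ldual : Submodule ℤ (Fin n → ℝ)) (hL : IsLat L)
    (hdual : ∀ x : Fin n → ℝ, x ∈ Ldual ↔ ∀ ℓ ∈ L, ∃ k : ℤ, x ⬝ᵥ ℓ = (k : ℝ))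
    (m m' : ℝ)
    (hm : IsLeast {r : ℝ | ∃ x ∈ L, x ≠ 0 ∧ x ⬝ᵥ x = r} m)
    (hm' : IsLeast {r : ℝ | ∃ x ∈ Ldual, x ≠ 0 ∧ x ⬝ᵥ x = r} m')
    (X : Finset (Fin n → ℝ)) (hX : ∀ x, x ∈ X ↔ x ∈ L ∧ x ⬝ᵥ x = m)
    (hD2 : ∀ α : Fin n → ℝ, ∑ x ∈ X, (x ⬝ᵥ α) ^ 2 = (X.card * m / n) * (α ⬝ᵥ α))
    (hD4 : ∀ α : Fin n → ℝ,
      ∑ x ∈ X, (x ⬝ᵥ α) ^ 4 = (3 * X.card * m ^ 2 / (n * (n + 2))) * (α ⬝ᵥ α) ^ 2) :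
    m * m' ≥ (n + 2) / 3 :=
  stmt6_general L Ldual hdual m m' hm hm' X hX hD2 hD4
end

section
/- Let L be a lattice satisfying the design equations (D2) and (D4), and let α ∈ L^♯ be a nonzero dual vector with (x,α) ∈ {0, ±1} for all x ∈ Min(L). Then 3·min(L)·(α,α) ≥ n+2. -/
/-! Both design equations are evaluated at `α`. Since `(x,α) ∈ {0, ±1}`, the left-hand sides
`∑ (x,α)²` and `∑ (x,α)⁴` agree, and comparing the right-hand sides forces `3 m (α,α) = n + 2`. -/

open Matrix Finset

lemma Finset.sum_sq_eq_sum_pow_four_of_mem_zero_one_neg_one {ι : Type*} {s : Finset ι}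
    {f : ι → ℝ} (hf : ∀ i ∈ s, f i = 0 ∨ f i = 1 ∨ f i = -1) :
    ∑ i ∈ s, f i ^ 2 = ∑ i ∈ s, f i ^ 4 := by
  refine Finset.sum_congr rfl fun i hi => ?_
  rcases hf i hi with h | h | h <;> norm_num [h]

lemma three_mul_mul_eq_of_second_moment_eq_fourth_moment {N m A d : ℝ} (hN : N ≠ 0)
    (hm : m ≠ 0) (hA : A ≠ 0) (hd : 0 < d)
    (h : N * m / d * A = 3 * N * m ^ 2 / (d * (d + 2)) * A ^ 2) :
    3 * m * A = d + 2 := by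
  have hd2 : d + 2 ≠ 0 := by positivity
  field_simp at h
  linarith

theorem stmt7_general {n : ℕ} (L : Submodule ℤ (Fin n → ℝ))
    (m : ℝ) (hm : IsLeast {r : ℝ | ∃ x ∈ L, x ≠ 0 ∧ x ⬝ᵥ x = r} m)
    (X : Finset (Fin n → ℝ)) (hX : ∀ x, x ∈ X ↔ x ∈ L ∧ x ⬝ᵥ x = m)
    (hD2 : ∀ α : Fin n → ℝ, ∑ x ∈ X, (x ⬝ᵥ α) ^ 2 = (X.card * m / n) * (α ⬝ᵥ α))
    (hD4 : ∀ α : Fin n → ℝ,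
      ∑ x ∈ X, (x ⬝ᵥ α) ^ 4 = (3 * X.card * m ^ 2 / (n * (n + 2))) * (α ⬝ᵥ α) ^ 2)
    (α : Fin n → ℝ) (hα0 : α ≠ 0)
    (hval : ∀ x ∈ X, x ⬝ᵥ α = 0 ∨ x ⬝ᵥ α = 1 ∨ x ⬝ᵥ α = -1) :
    3 * m * (α ⬝ᵥ α) ≥ n + 2 := by
  obtain ⟨x₀, hx₀L, hx₀, rfl⟩ := hm.1
  have hcard : (X.card : ℝ) ≠ 0 := by
    exact_mod_cast (Finset.card_pos.2 ⟨x₀, (hX x₀).2 ⟨hx₀L, rfl⟩⟩).ne'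
  have hn : (0 : ℝ) < n := by
    rcases Nat.eq_zero_or_pos n with rfl | hn
    · exact absurd (Subsingleton.elim α 0) hα0
    · exact_mod_cast hn
  have hmoments := hD2 α
  rw [Finset.sum_sq_eq_sum_pow_four_of_mem_zero_one_neg_one hval, hD4 α] at hmoments
  exact (three_mul_mul_eq_of_second_moment_eq_fourth_moment hcard
    (dotProduct_self_eq_zero.not.2 hx₀) (dotProduct_self_eq_zero.not.2 hα0) hn
    hmoments.symm).ge

/-- If `L` satisfies the design equations (D2) and (D4) and `α ∈ L♯` is a
nonzero dual vector with `(x,α) ∈ {0,±1}` for all minimal vectors `x`, then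
`3·min(L)·(α,α) ≥ n+2`. -/
theorem stmt7 {n : ℕ} (hn : 0 < n) (L : Submodule ℤ (Fin n → ℝ)) (hL : IsLat L)
    (m : ℝ) (hm : IsLeast {r : ℝ | ∃ x ∈ L, x ≠ 0 ∧ x ⬝ᵥ x = r} m)
    (X : Finset (Fin n → ℝ)) (hX : ∀ x, x ∈ X ↔ x ∈ L ∧ x ⬝ᵥ x = m)
    (hD2 : ∀ α : Fin n → ℝ, ∑ x ∈ X, (x ⬝ᵥ α) ^ 2 = (X.card * m / n) * (α ⬝ᵥ α))
    (hD4 : ∀ α : Fin n → ℝ,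
      ∑ x ∈ X, (x ⬝ᵥ α) ^ 4 = (3 * X.card * m ^ 2 / (n * (n + 2))) * (α ⬝ᵥ α) ^ 2)
    (α : Fin n → ℝ) (hα0 : α ≠ 0)
    (hαdual : ∀ ℓ ∈ L, ∃ k : ℤ, α ⬝ᵥ ℓ = (k : ℝ))
    (hval : ∀ x ∈ X, x ⬝ᵥ α = 0 ∨ x ⬝ᵥ α = 1 ∨ x ⬝ᵥ α = -1) :
    3 * m * (α ⬝ᵥ α) ≥ n + 2 :=
  stmt7_general L m hm X hX hD2 hD4 α hα0 hval
end

section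
/- If the minimal vectors of each indecomposable root lattice R_i of dimension n_i in an orthogonal decomposition R₁ ⊥ … ⊥ R_s of the root sublattice of a 24-dimensional even unimodular lattice L satisfy ∑_{x∈Min(R_i)}(x,α)² = (2|Min(R_i)|/n_i)(α,α) for α in the span of R_i, and Min(L) satisfies ∑_{x∈Min(L)}(x,α)² = (2|Min(L)|/24)(α,α) for all α ∈ ℝ^24, and the root lattice has full rank, then |Min(R_i)|/n_i = |Min(L)|/24 for every i. -/
open Matrix Finset

/-
Take a nonzero root `α ∈ R i` and evaluate the global design identity at `α`. Roots of the other
components are orthogonal to `α`, so the left side reduces to the sum over `R i`, which the design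
identity of `R i` evaluates. Comparing the two coefficients of `(α, α) ≠ 0` gives the claim.
-/

lemma Finset.sum_biUnion_eq_sum_of_eq_zero {ι β M : Type*} [Fintype ι] [DecidableEq β]
    [AddCommMonoid M] {t : ι → Finset β} (hdisj : ∀ i j, i ≠ j → Disjoint (t i) (t j))
    {f : β → M} (i : ι) (hf : ∀ j ≠ i, ∀ x ∈ t j, f x = 0) :
    ∑ x ∈ univ.biUnion t, f x = ∑ x ∈ t i, f x := by
  rw [sum_biUnion fun a _ b _ hab => hdisj a b hab]
  exact sum_eq_single_of_mem i (mem_univ i) fun j _ hji => sum_eq_zero (hf j hji)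

theorem stmt9_general (s : ℕ) (R : Fin s → Finset (Fin 24 → ℝ)) (nd : Fin s → ℕ)
    (MinL : Finset (Fin 24 → ℝ))
    (hpart : MinL = Finset.univ.biUnion R)
    (hdisj : ∀ i j, i ≠ j → Disjoint (R i) (R j))
    (horth : ∀ i j, i ≠ j → ∀ x ∈ R i, ∀ y ∈ R j, x ⬝ᵥ y = 0)
    (hnontriv : ∀ i, ∃ x ∈ R i, x ≠ (0 : Fin 24 → ℝ))
    (hcomp : ∀ i, ∀ α ∈ Submodule.span ℝ ((R i : Set (Fin 24 → ℝ))),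
      ∑ x ∈ R i, (x ⬝ᵥ α) ^ 2 = (2 * (R i).card / nd i) * (α ⬝ᵥ α))
    (hglob : ∀ α : Fin 24 → ℝ,
      ∑ x ∈ MinL, (x ⬝ᵥ α) ^ 2 = (2 * MinL.card / 24) * (α ⬝ᵥ α)) :
    ∀ i, ((R i).card : ℝ) / nd i = (MinL.card : ℝ) / 24 := by
  intro i
  obtain ⟨α, hαR, hα0⟩ := hnontriv i
  have hsum : ∑ x ∈ MinL, (x ⬝ᵥ α) ^ 2 = ∑ x ∈ R i, (x ⬝ᵥ α) ^ 2 := by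
    rw [hpart]
    exact sum_biUnion_eq_sum_of_eq_zero hdisj i fun j hji x hx => by
      rw [horth j i hji x hx α hαR, sq, zero_mul]
  have hcoeff := hglob α
  rw [hsum, hcomp i α (Submodule.subset_span hαR)] at hcoeff
  have hαα : α ⬝ᵥ α ≠ 0 := mt dotProduct_self_eq_zero.mp hα0
  have htwice := mul_right_cancel₀ hαα hcoeff
  rw [mul_div_assoc, mul_div_assoc] at htwice
  exact mul_left_cancel₀ two_ne_zero htwice

/-- If the minimal vectors of each indecomposable component `R i` (of dimension
`nd i`) of the root sublattice of a 24-dimensional even unimodular lattice form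
a 2-design on the span of `R i`, the components are pairwise orthogonal and
partition `Min(L)`, each component is nonzero (full rank), and `Min(L)` is a
2-design, then the Coxeter numbers agree: `|Min(R i)|/nd i = |Min(L)|/24`. -/
theorem stmt9 (s : ℕ) (R : Fin s → Finset (Fin 24 → ℝ)) (nd : Fin s → ℕ)
    (hnd : ∀ i, 0 < nd i)
    (MinL : Finset (Fin 24 → ℝ))
    (hpart : MinL = Finset.univ.biUnion R)
    (hdisj : ∀ i j, i ≠ j → Disjoint (R i) (R j))
    (horth : ∀ i j, i ≠ j → ∀ x ∈ R i, ∀ y ∈ R j, x ⬝ᵥ y = 0)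
    (hnontriv : ∀ i, ∃ x ∈ R i, x ≠ (0 : Fin 24 → ℝ))
    (hcomp : ∀ i, ∀ α ∈ Submodule.span ℝ ((R i : Set (Fin 24 → ℝ))),
      ∑ x ∈ R i, (x ⬝ᵥ α) ^ 2 = (2 * (R i).card / nd i) * (α ⬝ᵥ α))
    (hglob : ∀ α : Fin 24 → ℝ,
      ∑ x ∈ MinL, (x ⬝ᵥ α) ^ 2 = (2 * MinL.card / 24) * (α ⬝ᵥ α)) :
    ∀ i, ((R i).card : ℝ) / nd i = (MinL.card : ℝ) / 24 :=
  stmt9_general s R nd MinL hpart hdisj horth hnontriv hcomp hglob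
end

section
/- Let L be an even unimodular lattice with no roots (min(L) ≥ 4) and let v ∈ L with (v,v) ∈ 8ℤ. Then any two roots x ≠ ±y in the neighbor lattice L^(v) = L_v + ℤ(v/2) are orthogonal to each other. -/
open Matrix Finset

/-!
Roots `x`, `y` of the neighbor cannot lie in `L`, so both are `≡ v/2` modulo `L` and
`x ± y` lie in `L`. These are nonzero vectors of an even lattice without roots, hence have
norm at least `4`; as their norms add up to `2(x,x) + 2(y,y) = 8`, both equal `4`, and
`4(x,y) = (x+y,x+y) - (x-y,x-y) = 0`.
-/

lemma sub_half_mem_of_not_mem {ι : Type*} {L : Submodule ℤ (ι → ℝ)} {ℓ v z : ι → ℝ}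
    (hℓ : ℓ ∈ L) (hv : v ∈ L) (hz : ∃ j : ℤ, z = ℓ + (j : ℝ) • ((1 / 2 : ℝ) • v))
    (hzL : z ∉ L) : z - (1 / 2 : ℝ) • v ∈ L := by
  obtain ⟨j, rfl⟩ := hz
  obtain ⟨a, rfl | rfl⟩ := Int.even_or_odd' j
  · refine absurd ?_ hzL
    convert L.add_mem hℓ (L.smul_mem a hv) using 1
    push_cast
    module
  · convert L.add_mem hℓ (L.smul_mem a hv) using 1
    push_cast
    module

lemma add_mem_of_sub_half_mem {ι : Type*} {L : Submodule ℤ (ι → ℝ)} {v x y : ι → ℝ}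
    (hv : v ∈ L) (hx : x - (1 / 2 : ℝ) • v ∈ L) (hy : y - (1 / 2 : ℝ) • v ∈ L) : x + y ∈ L := by
  convert L.add_mem (L.add_mem hx hy) hv using 1
  module

section

variable {ι : Type*} [Fintype ι]

lemma four_le_dotProduct_self_of_mem (L : Submodule ℤ (ι → ℝ))
    (heven : ∀ ℓ ∈ L, ∃ k : ℤ, ℓ ⬝ᵥ ℓ = 2 * (k : ℝ)) (hnoroots : ∀ ℓ ∈ L, ℓ ⬝ᵥ ℓ ≠ 2)
    {z : ι → ℝ} (hz : z ∈ L) (hz0 : z ≠ 0) : 4 ≤ z ⬝ᵥ z := by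
  obtain ⟨k, hk⟩ := heven z hz
  have hpos : 0 < z ⬝ᵥ z := dotProduct_self_star_pos_iff.mpr hz0
  have hk_ne_one : k ≠ 1 := by rintro rfl; exact hnoroots z hz (by simpa using hk)
  have hk_pos : 0 < k := by exact_mod_cast (by linarith : (0 : ℝ) < k)
  have : (2 : ℝ) ≤ k := by exact_mod_cast (by omega : 2 ≤ k)
  linarith

lemma dotProduct_eq_zero_of_four_le {x y : ι → ℝ} (hx : x ⬝ᵥ x = 2) (hy : y ⬝ᵥ y = 2)
    (hadd : 4 ≤ (x + y) ⬝ᵥ (x + y)) (hsub : 4 ≤ (x - y) ⬝ᵥ (x - y)) : x ⬝ᵥ y = 0 := by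
  have hyx : y ⬝ᵥ x = x ⬝ᵥ y := dotProduct_comm y x
  simp only [add_dotProduct, dotProduct_add, sub_dotProduct, dotProduct_sub, hx, hy, hyx]
    at hadd hsub
  linarith

end

theorem stmt10_general {n : ℕ} (L : Submodule ℤ (Fin n → ℝ))
    (heven : ∀ ℓ ∈ L, ∃ k : ℤ, ℓ ⬝ᵥ ℓ = 2 * (k : ℝ))
    (hnoroots : ∀ ℓ ∈ L, ℓ ⬝ᵥ ℓ ≠ 2)
    (v : Fin n → ℝ) (hv : v ∈ L)
    (M : Set (Fin n → ℝ))
    (hM : M = {z : Fin n → ℝ | ∃ ℓ ∈ L, (∃ k : ℤ, ℓ ⬝ᵥ v = 2 * (k : ℝ)) ∧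
      ∃ j : ℤ, z = ℓ + (j : ℝ) • ((1 / 2 : ℝ) • v)}) :
    ∀ x ∈ M, ∀ y ∈ M, x ⬝ᵥ x = 2 → y ⬝ᵥ y = 2 → x ≠ y → x ≠ -y → x ⬝ᵥ y = 0 := by
  subst hM
  rintro x ⟨ℓ₁, hℓ₁, -, hx⟩ y ⟨ℓ₂, hℓ₂, -, hy⟩ hxx hyy hxy hxny
  have hx' := sub_half_mem_of_not_mem hℓ₁ hv hx fun h => hnoroots x h hxx
  have hy' := sub_half_mem_of_not_mem hℓ₂ hv hy fun h => hnoroots y h hyy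
  have hadd : x + y ∈ L := add_mem_of_sub_half_mem hv hx' hy'
  have hsub : x - y ∈ L := sub_sub_sub_cancel_right x y _ ▸ L.sub_mem hx' hy'
  exact dotProduct_eq_zero_of_four_le hxx hyy
    (four_le_dotProduct_self_of_mem L heven hnoroots hadd
      fun h => hxny (eq_neg_of_add_eq_zero_left h))
    (four_le_dotProduct_self_of_mem L heven hnoroots hsub (sub_ne_zero.mpr hxy))

/-- Let `L` be an even unimodular lattice with no roots, and `v ∈ L` with
`(v,v) ∈ 8ℤ`. Then any two roots `x ≠ ±y` of the neighbor
`L^(v) = L_v + ℤ(v/2)` are orthogonal. -/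
theorem stmt10 {n : ℕ} (L : Submodule ℤ (Fin n → ℝ)) (hL : IsLat L)
    (heven : ∀ ℓ ∈ L, ∃ k : ℤ, ℓ ⬝ᵥ ℓ = 2 * (k : ℝ))
    (hunimod : ∀ x : Fin n → ℝ, x ∈ L ↔ ∀ ℓ ∈ L, ∃ k : ℤ, x ⬝ᵥ ℓ = (k : ℝ))
    (hnoroots : ∀ ℓ ∈ L, ℓ ⬝ᵥ ℓ ≠ 2)
    (v : Fin n → ℝ) (hv : v ∈ L) (hv8 : ∃ k : ℤ, v ⬝ᵥ v = 8 * (k : ℝ))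
    (M : Set (Fin n → ℝ))
    (hM : M = {z : Fin n → ℝ | ∃ ℓ ∈ L, (∃ k : ℤ, ℓ ⬝ᵥ v = 2 * (k : ℝ)) ∧
      ∃ j : ℤ, z = ℓ + (j : ℝ) • ((1 / 2 : ℝ) • v)}) :
    ∀ x ∈ M, ∀ y ∈ M, x ⬝ᵥ x = 2 → y ⬝ᵥ y = 2 → x ≠ y → x ≠ -y → x ⬝ᵥ y = 0 :=
  stmt10_general L heven hnoroots v hv M hM
end

section
/- Let L be a unimodular lattice in ℝ^n and F = {v₁,…,v_n} ⊂ L a p-frame (pairwise orthogonal vectors with (v_i,v_i) = p, p prime). Then C(L,F) = {(ā₁,…,ā_n) ∈ 𝔽_p^n : ∑ a_i v_i ∈ L, a_i ∈ (1/p)ℤ} is a self-dual code in 𝔽_p^n. -/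
/-!
Orthogonality of the frame gives `(∑ (aᵢ/p) vᵢ) ⬝ (∑ (bᵢ/p) vᵢ) = (∑ aᵢ bᵢ) / p`, so integrality of `L`
makes any two words of `C(L,F)` orthogonal mod `p`. Conversely, since the `vᵢ ∈ L` form an orthogonal
basis, every `ℓ ∈ L` equals `∑ ((ℓ ⬝ vᵢ)/p) vᵢ` with `ℓ ⬝ vᵢ ∈ ℤ`, i.e. `ℓ` itself lies over a word of
`C(L,F)`; a word orthogonal to all of `C(L,F)` therefore lifts to a vector of `L^♯ = L`.
-/

open Matrix Finset

section OrthogonalFrame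

variable {m ι : Type*} [Fintype m] [Fintype ι] {v : ι → m → ℝ} {r : ℝ}

theorem sum_smul_dotProduct_of_orthogonal (horth : ∀ i j, i ≠ j → v i ⬝ᵥ v j = 0)
    (hnorm : ∀ i, v i ⬝ᵥ v i = r) (g : ι → ℝ) (j : ι) :
    (∑ i, g i • v i) ⬝ᵥ v j = g j * r := by
  rw [sum_dotProduct, Finset.sum_eq_single j
    (fun i _ hij => by rw [smul_dotProduct, horth i j hij, smul_zero])
    (fun hj => absurd (mem_univ j) hj), smul_dotProduct, hnorm j, smul_eq_mul]

theorem sum_smul_dotProduct_sum_smul_of_orthogonal (horth : ∀ i j, i ≠ j → v i ⬝ᵥ v j = 0)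
    (hnorm : ∀ i, v i ⬝ᵥ v i = r) (g h : ι → ℝ) :
    (∑ i, g i • v i) ⬝ᵥ (∑ i, h i • v i) = r * ∑ i, g i * h i := by
  rw [dotProduct_sum, Finset.mul_sum]
  refine Finset.sum_congr rfl fun j _ => ?_
  rw [dotProduct_smul, sum_smul_dotProduct_of_orthogonal horth hnorm, smul_eq_mul]
  ring

theorem linearIndependent_of_orthogonal (horth : ∀ i j, i ≠ j → v i ⬝ᵥ v j = 0)
    (hnorm : ∀ i, v i ⬝ᵥ v i = r) (hr : r ≠ 0) : LinearIndependent ℝ v := by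
  rw [Fintype.linearIndependent_iff]
  intro g hg j
  have h := sum_smul_dotProduct_of_orthogonal horth hnorm g j
  rw [hg, zero_dotProduct] at h
  exact (mul_eq_zero.mp h.symm).resolve_right hr

theorem eq_sum_dotProduct_div_smul_of_orthogonal (horth : ∀ i j, i ≠ j → v i ⬝ᵥ v j = 0)
    (hnorm : ∀ i, v i ⬝ᵥ v i = r) (hr : r ≠ 0) (hcard : Fintype.card ι = Fintype.card m)
    (x : m → ℝ) : x = ∑ i, ((x ⬝ᵥ v i) / r) • v i := by
  have hspan : Submodule.span ℝ (Set.range v) = ⊤ :=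
    (linearIndependent_of_orthogonal horth hnorm hr).span_eq_top_of_card_eq_finrank'
      (by simp [hcard])
  obtain ⟨g, hg⟩ := Submodule.mem_span_range_iff_exists_fun ℝ |>.mp
    (hspan ▸ Submodule.mem_top : x ∈ Submodule.span ℝ (Set.range v))
  have hcoeff : ∀ j, g j = (x ⬝ᵥ v j) / r := fun j => by
    rw [← hg, sum_smul_dotProduct_of_orthogonal horth hnorm, mul_div_cancel_right₀ _ hr]
  simp only [← hcoeff, hg]

end OrthogonalFrame

section FrameLattice

variable {m ι : Type*} [Fintype m] [Fintype ι] {v : ι → m → ℝ} {p : ℕ}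
  {L : Submodule ℤ (m → ℝ)}

/-- The vector `∑ (aᵢ/p) vᵢ`, whose coefficients reduce mod `ℤ` to the word `(āᵢ) ∈ 𝔽_pⁿ`. -/
noncomputable def frameVec (p : ℕ) (v : ι → m → ℝ) (a : ι → ℤ) : m → ℝ :=
  ∑ i, ((a i : ℝ) / p) • v i

theorem frameVec_dotProduct_frameVec (hp : p ≠ 0) (horth : ∀ i j, i ≠ j → v i ⬝ᵥ v j = 0)
    (hnorm : ∀ i, v i ⬝ᵥ v i = p) (a b : ι → ℤ) :
    frameVec p v a ⬝ᵥ frameVec p v b = ((∑ i, a i * b i : ℤ) : ℝ) / p := by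
  have hp' : (p : ℝ) ≠ 0 := Nat.cast_ne_zero.mpr hp
  rw [frameVec, frameVec, sum_smul_dotProduct_sum_smul_of_orthogonal horth hnorm]
  push_cast
  rw [Finset.sum_div, Finset.mul_sum]
  refine Finset.sum_congr rfl fun i _ => ?_
  field_simp

theorem dvd_sum_mul_of_frameVec_mem (hint : ∀ x ∈ L, ∀ y ∈ L, ∃ k : ℤ, x ⬝ᵥ y = k)
    (hp : p ≠ 0) (horth : ∀ i j, i ≠ j → v i ⬝ᵥ v j = 0) (hnorm : ∀ i, v i ⬝ᵥ v i = p)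
    {a b : ι → ℤ} (ha : frameVec p v a ∈ L) (hb : frameVec p v b ∈ L) :
    (p : ℤ) ∣ ∑ i, a i * b i := by
  obtain ⟨k, hk⟩ := hint _ ha _ hb
  rw [frameVec_dotProduct_frameVec hp horth hnorm,
    div_eq_iff (Nat.cast_ne_zero.mpr hp)] at hk
  exact ⟨k, by rw [mul_comm]; exact_mod_cast hk⟩

theorem exists_eq_frameVec_of_mem (hint : ∀ x ∈ L, ∀ y ∈ L, ∃ k : ℤ, x ⬝ᵥ y = k)
    (hp : p ≠ 0) (hvL : ∀ i, v i ∈ L) (horth : ∀ i j, i ≠ j → v i ⬝ᵥ v j = 0)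
    (hnorm : ∀ i, v i ⬝ᵥ v i = p) (hcard : Fintype.card ι = Fintype.card m)
    {ℓ : m → ℝ} (hℓ : ℓ ∈ L) : ∃ k : ι → ℤ, ℓ = frameVec p v k := by
  choose k hk using fun i => hint ℓ hℓ (v i) (hvL i)
  refine ⟨k, ?_⟩
  conv_lhs => rw [eq_sum_dotProduct_div_smul_of_orthogonal horth hnorm
    (Nat.cast_ne_zero.mpr hp) hcard ℓ]
  simp only [hk, frameVec]

theorem frameVec_mem_of_forall_dvd (hdual : ∀ x, (∀ ℓ ∈ L, ∃ k : ℤ, x ⬝ᵥ ℓ = k) → x ∈ L)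
    (hp : p ≠ 0) (horth : ∀ i j, i ≠ j → v i ⬝ᵥ v j = 0) (hnorm : ∀ i, v i ⬝ᵥ v i = p)
    (hL : ∀ ℓ ∈ L, ∃ k : ι → ℤ, ℓ = frameVec p v k) {a : ι → ℤ}
    (ha : ∀ k, frameVec p v k ∈ L → (p : ℤ) ∣ ∑ i, a i * k i) : frameVec p v a ∈ L := by
  refine hdual _ fun ℓ hℓ => ?_
  obtain ⟨k, rfl⟩ := hL ℓ hℓ
  obtain ⟨q, hq⟩ := ha k hℓ
  refine ⟨q, ?_⟩
  rw [frameVec_dotProduct_frameVec hp horth hnorm, hq]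
  push_cast
  field_simp [Nat.cast_ne_zero.mpr hp]

end FrameLattice

theorem stmt11_general {n : ℕ} (p : ℕ) (hp : p.Prime)
    (L : Submodule ℤ (Fin n → ℝ))
    (hunimod : ∀ x : Fin n → ℝ, x ∈ L ↔ ∀ ℓ ∈ L, ∃ k : ℤ, x ⬝ᵥ ℓ = (k : ℝ))
    (v : Fin n → (Fin n → ℝ)) (hvL : ∀ i, v i ∈ L)
    (horth : ∀ i j, i ≠ j → v i ⬝ᵥ v j = 0)
    (hnorm : ∀ i, v i ⬝ᵥ v i = p)
    (C : Set (Fin n → ZMod p))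
    (hC : ∀ c : Fin n → ZMod p, c ∈ C ↔ ∃ a : Fin n → ℤ,
      (∀ i, c i = (a i : ZMod p)) ∧ (∑ i, ((a i : ℝ) / p) • v i) ∈ L) :
    ∀ c : Fin n → ZMod p, c ∈ C ↔ ∀ c' ∈ C, ∑ i, c i * c' i = 0 := by
  have hint : ∀ x ∈ L, ∀ y ∈ L, ∃ k : ℤ, x ⬝ᵥ y = k := fun x hx => (hunimod x).1 hx
  intro c
  constructor
  · intro hc c' hc'
    obtain ⟨a, hca, ha⟩ := (hC c).1 hc
    obtain ⟨b, hcb, hb⟩ := (hC c').1 hc'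
    have hdvd := dvd_sum_mul_of_frameVec_mem hint hp.ne_zero horth hnorm ha hb
    rw [← ZMod.intCast_zmod_eq_zero_iff_dvd] at hdvd
    push_cast at hdvd
    simpa only [hca, hcb] using hdvd
  · intro horthC
    refine (hC c).2 ⟨fun i => (c i).valMinAbs, fun i => (c i).coe_valMinAbs.symm, ?_⟩
    refine frameVec_mem_of_forall_dvd (fun x => (hunimod x).2) hp.ne_zero horth hnorm
      (fun ℓ => exists_eq_frameVec_of_mem hint hp.ne_zero hvL horth hnorm rfl) fun k hk => ?_
    rw [← ZMod.intCast_zmod_eq_zero_iff_dvd]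
    push_cast
    simpa only [ZMod.coe_valMinAbs] using horthC _ ((hC _).2 ⟨k, fun _ => rfl, hk⟩)

/-- If `L` is a unimodular lattice and `{v₁,…,v_n} ⊂ L` a `p`-frame, then the
code `C(L,F) = {(ā₁,…,ā_n) : ∑ aᵢvᵢ ∈ L, aᵢ ∈ (1/p)ℤ}` is self-dual in `𝔽_pⁿ`. -/
theorem stmt11 {n : ℕ} (p : ℕ) (hp : p.Prime)
    (L : Submodule ℤ (Fin n → ℝ)) (hL : IsLat L)
    (hunimod : ∀ x : Fin n → ℝ, x ∈ L ↔ ∀ ℓ ∈ L, ∃ k : ℤ, x ⬝ᵥ ℓ = (k : ℝ))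
    (v : Fin n → (Fin n → ℝ)) (hvL : ∀ i, v i ∈ L)
    (horth : ∀ i j, i ≠ j → v i ⬝ᵥ v j = 0)
    (hnorm : ∀ i, v i ⬝ᵥ v i = p)
    (C : Set (Fin n → ZMod p))
    (hC : ∀ c : Fin n → ZMod p, c ∈ C ↔ ∃ a : Fin n → ℤ,
      (∀ i, c i = (a i : ZMod p)) ∧ (∑ i, ((a i : ℝ) / p) • v i) ∈ L) :
    ∀ c : Fin n → ZMod p, c ∈ C ↔ ∀ c' ∈ C, ∑ i, c i * c' i = 0 :=
  stmt11_general p hp L hunimod v hvL horth hnorm C hC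
end

section
/- For the code-to-lattice construction L(C) from a self-dual code C ≤ 𝔽_p^n and a p-frame, the lattice L(C) is even if and only if p = 2 and C is doubly-even (all codewords have weight divisible by 4). -/
/-!
For `x = ∑ (aᵢ / p) vᵢ`, orthogonality of the frame gives `(x, x) = (∑ aᵢ²) / p`. The frame
vector `v₀` itself lies in `L(C)` and has norm `p`, so an even `L(C)` forces `p = 2`. Then
`(x, x) = (∑ aᵢ²) / 2`, and since `aᵢ² ≡ 0` or `1 (mod 4)` according to the parity of `aᵢ`,
`∑ aᵢ²` is congruent mod 4 to the weight of the codeword `a mod 2`; so `(x, x)` is even for all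
`x ∈ L(C)` exactly when every codeword has weight divisible by 4.
-/

open Matrix Finset

theorem dotProduct_sum_smul_self_of_orthogonal {ι m R : Type*} [Fintype ι] [Fintype m]
    [CommSemiring R] (v : ι → m → R) (horth : ∀ i j, i ≠ j → v i ⬝ᵥ v j = 0) (c : ι → R) :
    (∑ i, c i • v i) ⬝ᵥ (∑ i, c i • v i) = ∑ i, c i ^ 2 * (v i ⬝ᵥ v i) := by
  simp_rw [sum_dotProduct, dotProduct_sum, smul_dotProduct, dotProduct_smul, smul_eq_mul]
  refine Finset.sum_congr rfl fun i _ => ?_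
  rw [Finset.sum_eq_single i (fun j _ hji => by rw [horth i j hji.symm, mul_zero, mul_zero])
    (by simp)]
  ring

theorem dotProduct_self_sum_div_smul_of_frame {ι m : Type*} [Fintype ι] [Fintype m] {q : ℝ}
    (hq : q ≠ 0) (v : ι → m → ℝ) (horth : ∀ i j, i ≠ j → v i ⬝ᵥ v j = 0)
    (hnorm : ∀ i, v i ⬝ᵥ v i = q) (a : ι → ℤ) :
    (∑ i, ((a i : ℝ) / q) • v i) ⬝ᵥ (∑ i, ((a i : ℝ) / q) • v i) = (∑ i, (a i : ℝ) ^ 2) / q := by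
  rw [dotProduct_sum_smul_self_of_orthogonal v horth, Finset.sum_div]
  refine Finset.sum_congr rfl fun i _ => ?_
  rw [hnorm]
  field_simp

theorem Int.sq_modEq_four_ite (x : ℤ) : x ^ 2 ≡ if (x : ZMod 2) ≠ 0 then 1 else 0 [ZMOD 4] := by
  have hodd : (x : ZMod 2) ≠ 0 ↔ Odd x := by
    rw [ne_eq, ZMod.intCast_eq_zero_iff_even, Int.not_even_iff_odd]
  simp only [hodd]
  split_ifs with hx
  · exact Int.sq_mod_four_eq_one_of_odd hx
  · obtain ⟨r, rfl⟩ := Int.not_odd_iff_even.mp hx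
    exact Int.modEq_zero_iff_dvd.mpr ⟨r ^ 2, by ring⟩

theorem Int.sum_sq_modEq_card_odd {ι : Type*} [Fintype ι] (a : ι → ℤ) :
    ∑ i, a i ^ 2 ≡ #{i | (a i : ZMod 2) ≠ 0} [ZMOD 4] := by
  rw [Finset.card_filter]
  push_cast
  exact Int.ModEq.sum fun i _ => Int.sq_modEq_four_ite (a i)

theorem Int.exists_cast_div_two_eq_two_mul_iff_four_dvd (m : ℤ) :
    (∃ k : ℤ, (m : ℝ) / 2 = 2 * k) ↔ 4 ∣ m := by
  constructor
  · rintro ⟨k, hk⟩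
    exact ⟨k, by exact_mod_cast (by linarith : (m : ℝ) = 4 * k)⟩
  · rintro ⟨k, rfl⟩
    exact ⟨k, by push_cast; ring⟩

theorem Nat.Prime.eq_two_of_cast_eq_two_mul {p : ℕ} (hp : p.Prime) {k : ℤ}
    (hk : (p : ℝ) = 2 * k) : p = 2 := by
  have h2 : (2 : ℤ) ∣ p := ⟨k, by exact_mod_cast hk⟩
  exact hp.even_iff.mp (even_iff_two_dvd.mpr (by exact_mod_cast h2))

/-- For the code-to-lattice construction from a self-dual code `C ≤ 𝔽_pⁿ` and a
`p`-frame, the lattice `L(C)` is even iff `p = 2` and `C` is doubly even. -/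
theorem stmt13 {n : ℕ} (hn : 0 < n) (p : ℕ) (hp : p.Prime)
    (v : Fin n → (Fin n → ℝ))
    (horth : ∀ i j, i ≠ j → v i ⬝ᵥ v j = 0)
    (hnorm : ∀ i, v i ⬝ᵥ v i = p)
    (C : Set (Fin n → ZMod p))
    (hC : ∀ c : Fin n → ZMod p, c ∈ C ↔ ∀ c' ∈ C, ∑ i, c i * c' i = 0) :
    (∀ x ∈ {x : Fin n → ℝ | ∃ a : Fin n → ℤ,
        (fun i => ((a i : ZMod p))) ∈ C ∧ x = ∑ i, ((a i : ℝ) / p) • v i},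
      ∃ k : ℤ, x ⬝ᵥ x = 2 * (k : ℝ)) ↔
    (p = 2 ∧ ∀ c ∈ C, 4 ∣ (Finset.univ.filter (fun i => c i ≠ 0)).card) := by
  have hp0 : (p : ℝ) ≠ 0 := Nat.cast_ne_zero.mpr hp.ne_zero
  have hnormSq := dotProduct_self_sum_div_smul_of_frame hp0 v horth hnorm
  constructor
  · intro heven
    -- `x = v₀` has coefficient vector `p e₀`, whose residue is `0 ∈ C`.
    have hp2 : p = 2 := by
      let a : Fin n → ℤ := Pi.single ⟨0, hn⟩ (p : ℤ)
      have ha : (fun i => (a i : ZMod p)) = 0 :=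
        funext fun i => by by_cases h : i = ⟨0, hn⟩ <;> simp [a, h]
      obtain ⟨k, hk⟩ := heven _ ⟨a, ha ▸ (hC 0).mpr (by simp), rfl⟩
      rw [hnormSq] at hk
      have hsq : ∑ i, (a i : ℝ) ^ 2 = (p : ℝ) ^ 2 := by simp [a, Pi.single_apply]
      rw [hsq, sq, mul_div_cancel_right₀ _ hp0] at hk
      exact hp.eq_two_of_cast_eq_two_mul hk
    subst hp2
    refine ⟨rfl, fun c hc => ?_⟩
    obtain ⟨k, hk⟩ := heven _ ⟨fun i => (c i).cast, by simpa using hc, rfl⟩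
    rw [hnormSq] at hk
    have hsq : 4 ∣ ∑ i, ((c i).cast : ℤ) ^ 2 :=
      (Int.exists_cast_div_two_eq_two_mul_iff_four_dvd _).mp ⟨k, by exact_mod_cast hk⟩
    exact Int.natCast_dvd_natCast.mp (by simpa using (Int.sum_sq_modEq_card_odd _).dvd_iff.mp hsq)
  · rintro ⟨rfl, hdoublyEven⟩ x ⟨a, ha, rfl⟩
    rw [hnormSq]
    exact_mod_cast (Int.exists_cast_div_two_eq_two_mul_iff_four_dvd _).mpr
      ((Int.sum_sq_modEq_card_odd a).dvd_iff.mpr (by exact_mod_cast hdoublyEven _ ha))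
end
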